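/- arXiv:2102.04384 — 2 statements merged into one kernel-verified Lean document; each statement's English description precedes it below -/
import Mathlib

section
/- Non-uniqueness of over-and-above: there exists an instance in which each agent is eligible for at most one preferential category and all categories' priorities are consistent with the baseline ordering, and two DISTINCT matchings that both comply with the eligibility requirements, are maximum beneficiary assignments, respect priorities, are non-wasteful, and are order preserving for q_{c_u^1} = q_{c_u} and q_{c_u^2} = 0. -/
open scoped Classical

/-- An instance of the rationing problem: a quota for every category and, for every
category `c`, a priority ranking `≿_c`: a total preorder on `N ∪ {∅}`, where we model
`N ∪ {∅}` as `Option N` with `none` playing the role of `∅`. -/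
structure Inst (N C : Type*) where
  quota : C → ℕ
  prio : C → Option N → Option N → Prop
  total : ∀ c x y, prio c x y ∨ prio c y x
  trans : ∀ c x y z, prio c x y → prio c y z → prio c x z

namespace Inst

variable {N C : Type*}

/-- The strict part `≻_c` of the priority ranking `≿_c`. -/
def Strict (I : Inst N C) (c : C) (x y : Option N) : Prop :=
  I.prio c x y ∧ ¬ I.prio c y x

/-- Agent `i` is eligible for category `c` if `i ≻_c ∅`. -/
def Eligible (I : Inst N C) (i : N) (c : C) : Prop :=
  I.Strict c (some i) none

end Inst

variable {N C : Type*} [Fintype N] [DecidableEq N] [DecidableEq C]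

/-- The number of matched agents of (the function) `μ`. -/
def msize (μ : N → Option C) : ℕ :=
  (Finset.univ.filter fun i => μ i ≠ none).card

/-- `μ` satisfies the capacity constraints: every category `c` is matched
to at most `quota c` agents. -/
def Inst.IsMatching (I : Inst N C) (μ : N → Option C) : Prop :=
  ∀ c, (Finset.univ.filter fun i => μ i = some c).card ≤ I.quota c

/-- A baseline ordering `≻_π`, given as a duplicate-free list of all agents,
listed from highest priority to lowest priority; so `i ≻_π j` iff
`order.indexOf i < order.indexOf j`. -/
def IsBaseline (order : List N) : Prop :=
  order.Nodup ∧ ∀ i : N, i ∈ order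

/-- `μ` complies with the eligibility requirements. -/
def Complies (I : Inst N C) (μ : N → Option C) : Prop :=
  ∀ (i : N) (c : C), μ i = some c → I.Eligible i c

/-- `μ` respects priorities: no unmatched agent has strictly higher priority for some
category than an agent matched to it. -/
def RespectsPriorities (I : Inst N C) (μ : N → Option C) : Prop :=
  ¬ ∃ (i j : N) (c : C), μ i = some c ∧ μ j = none ∧ I.Strict c (some j) (some i)

/-- The number of agents matched to category `c` by `μ`. -/
def catCount (μ : N → Option C) (c : C) : ℕ :=
  (Finset.univ.filter fun i => μ i = some c).card

/-- `μ` is non-wasteful: an eligible agent is only left unmatched if all units of the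
category are used. -/
def NonWasteful (I : Inst N C) (μ : N → Option C) : Prop :=
  ∀ (i : N) (c : C), I.Eligible i c → μ i = none → catCount μ c = I.quota c

/-- The number of agents matched to a preferential category (a category other than the
unreserved category `cu`). -/
def beneCount (cu : C) (μ : N → Option C) : ℕ :=
  (Finset.univ.filter fun i => μ i ≠ none ∧ μ i ≠ some cu).card

/-- `μ` is a maximum beneficiary assignment: it maximizes the number of agents matched to
preferential categories among all matchings complying with the eligibility requirements. -/
def MaxBene (I : Inst N C) (cu : C) (μ : N → Option C) : Prop :=
  ∀ ν : N → Option C, I.IsMatching ν → Complies I ν → beneCount cu ν ≤ beneCount cu μ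

/-- The priorities are consistent with the baseline ordering: for each category the
eligible agents are ranked according to `≻_π`. -/
def Consistent (I : Inst N C) (order : List N) : Prop :=
  ∀ (c : C) (i j : N), I.Eligible i c → I.Eligible j c →
    (I.Strict c (some i) (some j) ↔ order.idxOf i < order.idxOf j)

/-- Each agent is eligible for at most one preferential category. -/
def OneCategory (I : Inst N C) (cu : C) : Prop :=
  ∀ (i : N) (c c' : C), c ≠ cu → c' ≠ cu → I.Eligible i c → I.Eligible i c' → c = c'

/-- One step of the minimum-guarantees rule: the considered agent is matched to a
preferential category she is eligible for if a unit of it remains, and otherwise to the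
unreserved category if an unreserved unit remains. -/
noncomputable def mgStep (I : Inst N C) (cu : C) (μ : N → Option C) (i : N) : N → Option C :=
  if h : ∃ c, c ≠ cu ∧ I.Eligible i c ∧ catCount μ c < I.quota c then
    Function.update μ i (some h.choose)
  else if catCount μ cu < I.quota cu then Function.update μ i (some cu)
  else μ

/-- The outcome of the minimum-guarantees rule: the agents are considered in order of the
baseline ordering from highest to lowest priority. -/
noncomputable def mgOutcome (I : Inst N C) (cu : C) (order : List N) : N → Option C :=
  order.foldl (mgStep I cu) fun _ => none

/-- Order preservation for `q_{c_u^1} = 0` and `q_{c_u^2} = q_{c_u}` (the unreserved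
category `cu` plays the role of `c_u^2`, and no agent is matched to `c_u^1`, so clause (i)
is vacuous): if `μ(j) ∈ C_p`, `i ≻_{μ(j)} j`, and `i` is eligible for `μ(j)`, then
`μ(i) ≠ c_u^2 = cu`. -/
def OrderPreservingMG (I : Inst N C) (cu : C) (μ : N → Option C) : Prop :=
  ∀ (i j : N) (ci cj : C), μ i = some ci → μ j = some cj → cj ≠ cu →
    I.Strict cj (some i) (some j) → I.Eligible i cj → ci ≠ cu

/-- One step of the first phase of the over-and-above rule: the considered agent `i` is
matched to the unreserved category only if an unreserved unit remains and, for any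
preferential category `c` that `i` is eligible for, at least `q_c` agents of `N_c` other
than `i` are still unmatched. -/
noncomputable def oaStep (I : Inst N C) (cu : C) (σ : N → Option C) (i : N) : N → Option C :=
  if catCount σ cu < I.quota cu ∧
      ∀ c : C, c ≠ cu → I.Eligible i c →
        I.quota c ≤ (Finset.univ.filter fun j => j ≠ i ∧ I.Eligible j c ∧ σ j = none).card then
    Function.update σ i (some cu)
  else σ

/-- The first phase of the over-and-above rule (allocation of the unreserved units),
considering the agents in order of the baseline ordering from highest to lowest priority. -/
noncomputable def oaPhase1 (I : Inst N C) (cu : C) (order : List N) : N → Option C :=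
  order.foldl (oaStep I cu) fun _ => none

/-- The outcome of the over-and-above rule: after the first phase, each preferential
category `c` is filled with the `min {q_c, |N_c|}` highest (baseline) priority agents of
`N_c` who are still unmatched. -/
noncomputable def oaOutcome (I : Inst N C) (cu : C) (order : List N) : N → Option C :=
  fun i =>
    if oaPhase1 I cu order i = some cu then some cu
    else if h : ∃ c, c ≠ cu ∧ I.Eligible i c ∧
        (Finset.univ.filter fun j => I.Eligible j c ∧ oaPhase1 I cu order j = none ∧
          order.idxOf j < order.idxOf i).card < I.quota c then
      some h.choose
    else none

/-- Order preservation for `q_{c_u^1} = q_{c_u}` and `q_{c_u^2} = 0` (the unreserved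
category `cu` plays the role of `c_u^1`, and no agent is matched to `c_u^2`, so clause (ii)
is vacuous): if `μ(i) ∈ C_p`, `i ≻_{μ(j)} j`, and `j` is eligible for `μ(i)`, then
`μ(j) ≠ c_u^1 = cu`. -/
def OrderPreservingOA (I : Inst N C) (cu : C) (μ : N → Option C) : Prop :=
  ∀ (i j : N) (ci cj : C), μ i = some ci → μ j = some cj → ci ≠ cu →
    I.Strict cj (some i) (some j) → I.Eligible j ci → cj ≠ cu

/-!
Take agents `0 ≻_π 1 ≻_π 2`, one unreserved unit and one unit of a preferential category for
which only agents `0` and `2` are eligible. Both `0 ↦ preferential, 1 ↦ unreserved` and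
`0 ↦ unreserved, 2 ↦ preferential` fill every unit with an eligible agent, so they are
non-wasteful maximum beneficiary assignments, and the agent each leaves unmatched ranks below
every holder of a unit she is eligible for. Order preservation would only be violated by a
preferential holder who outranks an unreserved holder eligible for her category: in the first
matching the unreserved holder `1` is ineligible for it, in the second the preferential holder
`2` ranks last.
-/

namespace Inst

variable {N C : Type*}

def ofRank (quota : C → ℕ) (rank : C → Option N → ℕ) : Inst N C where
  quota := quota
  prio c x y := rank c x ≤ rank c y
  total _ _ _ := le_total _ _
  trans _ _ _ _ := le_trans

theorem strict_ofRank_iff (quota : C → ℕ) (rank : C → Option N → ℕ) (c : C)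
    (x y : Option N) : (ofRank quota rank).Strict c x y ↔ rank c x < rank c y :=
  lt_iff_le_not_ge.symm

theorem eligible_ofRank_iff (quota : C → ℕ) (rank : C → Option N → ℕ) (i : N) (c : C) :
    (ofRank quota rank).Eligible i c ↔ rank c (some i) < rank c none :=
  strict_ofRank_iff quota rank c (some i) none

end Inst

section Counting

variable {N C : Type*} [Fintype N] [Fintype C] [DecidableEq C]

theorem beneCount_eq_sum_catCount (cu : C) (μ : N → Option C) :
    beneCount cu μ = ∑ c ∈ Finset.univ.erase cu, catCount μ c := by
  have hmaps : Set.MapsTo (fun i => (μ i).getD cu)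
      (Finset.univ.filter fun i => μ i ≠ none ∧ μ i ≠ some cu) (Finset.univ.erase cu) := by
    intro i hi
    obtain ⟨hnone, hcu⟩ := (Finset.mem_filter.1 hi).2
    obtain ⟨c, hc⟩ := Option.ne_none_iff_exists'.1 hnone
    simp_all
  rw [beneCount, Finset.card_eq_sum_card_fiberwise hmaps]
  refine Finset.sum_congr rfl fun c hc => congrArg Finset.card ?_
  ext i
  have hc : c ≠ cu := Finset.ne_of_mem_erase hc
  rcases hμ : μ i with _ | d <;> simp only [Finset.mem_filter, Finset.mem_univ, true_and, hμ]
  · simp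
  · grind

theorem beneCount_le_sum_quota (I : Inst N C) (cu : C) {μ : N → Option C}
    (hμ : I.IsMatching μ) : beneCount cu μ ≤ ∑ c ∈ Finset.univ.erase cu, I.quota c := by
  rw [beneCount_eq_sum_catCount]
  exact Finset.sum_le_sum fun c _ => hμ c

theorem maxBene_of_catCount_eq_quota (I : Inst N C) (cu : C) {μ : N → Option C}
    (hμ : ∀ c, c ≠ cu → catCount μ c = I.quota c) : MaxBene I cu μ := fun ν hν _ =>
  calc beneCount cu ν ≤ ∑ c ∈ Finset.univ.erase cu, I.quota c := beneCount_le_sum_quota I cu hν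
    _ = ∑ c ∈ Finset.univ.erase cu, catCount μ c :=
      Finset.sum_congr rfl fun c hc => (hμ c (Finset.ne_of_mem_erase hc)).symm
    _ = beneCount cu μ := (beneCount_eq_sum_catCount cu μ).symm

end Counting

-- Agent `1` has the rank of `∅` for the preferential category `1`, hence is ineligible for it.
def exampleInst : Inst (Fin 3) (Fin 2) :=
  .ofRank (fun _ => 1) fun c x => match c, x with
    | 0, some i => i
    | 0, none => 3
    | 1, some i => ![0, 2, 1] i
    | 1, none => 2

def topToPreferential : Fin 3 → Option (Fin 2) := ![some 1, some 0, none]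

def topToUnreserved : Fin 3 → Option (Fin 2) := ![some 0, none, some 1]

theorem exampleMatching_full_complies_respects_orderPreserving {μ : Fin 3 → Option (Fin 2)}
    (hμ : μ = topToPreferential ∨ μ = topToUnreserved) :
    (∀ c, catCount μ c = exampleInst.quota c) ∧ Complies exampleInst μ ∧
      RespectsPriorities exampleInst μ ∧ OrderPreservingOA exampleInst 0 μ := by
  rcases hμ with rfl | rfl <;>
  · simp only [Complies, RespectsPriorities, OrderPreservingOA, exampleInst,
      Inst.strict_ofRank_iff, Inst.eligible_ofRank_iff]
    refine ⟨?_, ?_, ?_, ?_⟩ <;> decide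

/-- Non-uniqueness of over-and-above: there exist an instance in which each
agent is eligible for at most one preferential category and all categories' priorities are
consistent with the baseline ordering, and two DISTINCT matchings that both comply with the
eligibility requirements, are maximum beneficiary assignments, respect priorities, are
non-wasteful, and are order preserving for `q_{c_u^1} = q_{c_u}` and `q_{c_u^2} = 0`. -/
theorem over_and_above_not_unique :
    ∃ (n m : ℕ) (I : Inst (Fin n) (Fin m)) (cu : Fin m) (order : List (Fin n)),
      IsBaseline order ∧ (∀ i : Fin n, I.Eligible i cu) ∧
        Consistent I order ∧ OneCategory I cu ∧
        ∃ μ ν : Fin n → Option (Fin m), μ ≠ ν ∧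
          (I.IsMatching μ ∧ Complies I μ ∧ MaxBene I cu μ ∧ RespectsPriorities I μ ∧
            NonWasteful I μ ∧ OrderPreservingOA I cu μ) ∧
          (I.IsMatching ν ∧ Complies I ν ∧ MaxBene I cu ν ∧ RespectsPriorities I ν ∧
            NonWasteful I ν ∧ OrderPreservingOA I cu ν) := by
  have hmatch (μ : Fin 3 → Option (Fin 2)) (hμ : μ = topToPreferential ∨ μ = topToUnreserved) :
      exampleInst.IsMatching μ ∧ Complies exampleInst μ ∧ MaxBene exampleInst 0 μ ∧
        RespectsPriorities exampleInst μ ∧ NonWasteful exampleInst μ ∧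
        OrderPreservingOA exampleInst 0 μ := by
    obtain ⟨hfull, hcomplies, hrespects, hpreserving⟩ :=
      exampleMatching_full_complies_respects_orderPreserving hμ
    exact ⟨fun c => (hfull c).le, hcomplies, maxBene_of_catCount_eq_quota _ _ fun c _ => hfull c,
      hrespects, fun _ c _ _ => hfull c, hpreserving⟩
  refine ⟨3, 2, exampleInst, 0, [0, 1, 2], ?_, ?_, ?_, ?_, topToPreferential, topToUnreserved,
    by decide, hmatch _ (.inl rfl), hmatch _ (.inr rfl)⟩ <;>
  · simp only [IsBaseline, Consistent, OneCategory, exampleInst,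
      Inst.strict_ofRank_iff, Inst.eligible_ofRank_iff]
    decide
end

section
/- For every instance of the rationing problem with an unreserved category split into c_u^1 and c_u^2 and every baseline ordering ≻_π, every matching output by the Smart Reverse Rejecting (SRR) rule complies with the eligibility requirements and is a maximum beneficiary assignment: it maximizes the number of agents matched to preferential categories among all matchings complying with the eligibility requirements. -/
/-! Outside `N_1` the agents can still be matched to reach the maximum number `msAvoid ∅` of
beneficiaries, and every rejection of the RR rule keeps the size of a maximum matching of the
reduced graph, so the preferential part of the outcome has exactly that size. The unreserved
units never displace a preferential assignment, and the serial allocation of `c_u^2` along `≻_π`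
respects its quota because the rank of a waiting agent among the waiting agents is injective. -/

open scoped Classical

variable {N C : Type*} [Fintype N] [DecidableEq N] [DecidableEq C]

/-- The number of agents matched to a preferential category, i.e. a category other than the
unreserved subcategories `cu1` and `cu2`. -/
def beneCount2 (cu1 cu2 : C) (μ : N → Option C) : ℕ :=
  (Finset.univ.filter fun i => μ i ≠ none ∧ μ i ≠ some cu1 ∧ μ i ≠ some cu2).card

/-- `μ` is a matching of the reservation graph of the instance restricted to the
preferential categories that leaves all agents of `S` unmatched. -/
def PMatch (I : Inst N C) (cu1 cu2 : C) (S : Finset N) (μ : N → Option C) : Prop :=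
  I.IsMatching μ ∧ (∀ i ∈ S, μ i = none) ∧
    ∀ (i : N) (c : C), μ i = some c → c ≠ cu1 ∧ c ≠ cu2 ∧ I.Eligible i c

/-- The maximum number of agents of `N \ S` that can simultaneously be matched to
preferential categories. -/
noncomputable def msAvoid (I : Inst N C) (cu1 cu2 : C) (S : Finset N) : ℕ :=
  sSup {k | ∃ μ : N → Option C, PMatch I cu1 cu2 S μ ∧ msize μ = k}

/-- The set `N_1` of agents receiving an unreserved unit of `c_u^1` under the SRR rule:
considering the agents in order of the baseline ordering from highest to lowest priority,
agent `i` is added to `N_1` if `|N_1| < q_{c_u^1}` and the agents in `N \ (N_1 ∪ {i})` can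
still be matched to the preferential categories so as to form a maximum beneficiary
assignment. -/
noncomputable def srrN1 (I : Inst N C) (cu1 cu2 : C) (order : List N) : Finset N :=
  order.foldl
    (fun N1 i =>
      if N1.card < I.quota cu1 ∧
          msAvoid I cu1 cu2 (insert i N1) = msAvoid I cu1 cu2 (∅ : Finset N) then
        insert i N1
      else N1) ∅

/-- `μ` is a matching of the reduced reservation graph (restricted to the preferential
categories) in which the agents of `N1` are removed and, additionally, all edges `{j,c}`
such that some rejected agent `i ∈ R` has `i ≻_c j` are removed. -/
def PMatchR (I : Inst N C) (cu1 cu2 : C) (N1 R : Finset N) (μ : N → Option C) : Prop :=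
  PMatch I cu1 cu2 (N1 ∪ R) μ ∧
    ∀ (i : N) (c : C), μ i = some c → ∀ j ∈ R, ¬ I.Strict c (some j) (some i)

/-- The size of a maximum size matching of the reduced reservation graph (restricted to the
preferential categories, without the agents of `N1`, with rejected set `R`). -/
noncomputable def msR (I : Inst N C) (cu1 cu2 : C) (N1 R : Finset N) : ℕ :=
  sSup {k | ∃ μ : N → Option C, PMatchR I cu1 cu2 N1 R μ ∧ msize μ = k}

/-- The rejected set of the RR rule run on the agents outside `N1` with the preferential
categories, processing the agents from lowest to highest baseline priority. -/
noncomputable def srrRej (I : Inst N C) (cu1 cu2 : C) (order : List N) (N1 : Finset N) :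
    Finset N :=
  (order.filter fun i => decide (i ∉ N1)).foldr
    (fun i R =>
      if msR I cu1 cu2 N1 (insert i R) = msR I cu1 cu2 N1 (∅ : Finset N) then insert i R
      else R) ∅

/-- The final matching of the SRR rule, given the set `N1` of agents matched to `c_u^1` and
the matching `μP` of the remaining agents to the preferential categories: the agents left
unmatched receive the `q_{c_u^2}` units of `c_u^2` in order of the baseline ordering from
highest to lowest priority. -/
noncomputable def srrFinal (I : Inst N C) (cu1 cu2 : C) (order : List N) (N1 : Finset N)
    (μP : N → Option C) : N → Option C := fun i =>
  if i ∈ N1 then some cu1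
  else
    match μP i with
    | some c => some c
    | none =>
      if (Finset.univ.filter fun j =>
            j ∉ N1 ∧ μP j = none ∧ order.idxOf j < order.idxOf i).card <
          I.quota cu2 then
        some cu2
      else none

/-- `μ` is a possible output of the Smart Reverse Rejecting (SRR) rule. -/
def IsSRROutcome (I : Inst N C) (cu1 cu2 : C) (order : List N) (μ : N → Option C) : Prop :=
  ∃ μP : N → Option C,
    PMatchR I cu1 cu2 (srrN1 I cu1 cu2 order) (srrRej I cu1 cu2 order (srrN1 I cu1 cu2 order))
      μP ∧
    msize μP =
      msR I cu1 cu2 (srrN1 I cu1 cu2 order) (srrRej I cu1 cu2 order (srrN1 I cu1 cu2 order)) ∧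
    μ = srrFinal I cu1 cu2 order (srrN1 I cu1 cu2 order) μP

theorem Finset.card_filter_rank_lt_le {α β : Type*} [LinearOrder β] (s : Finset α)
    {f : α → β} (hf : Set.InjOn f s) (q : ℕ) :
    (s.filter fun i => (s.filter fun j => f j < f i).card < q).card ≤ q := by
  set rank := fun i => (s.filter fun j => f j < f i).card
  have rank_strictMono : ∀ a ∈ s, ∀ b, f a < f b → rank a < rank b := by
    intro a ha b hab
    refine Finset.card_lt_card ((Finset.ssubset_iff_of_subset ?_).2 ⟨a, ?_, ?_⟩)
    · exact fun j hj => Finset.mem_filter.2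
        ⟨(Finset.mem_filter.1 hj).1, (Finset.mem_filter.1 hj).2.trans hab⟩
    · exact Finset.mem_filter.2 ⟨ha, hab⟩
    · simp
  calc _ ≤ (Finset.range q).card := by
        refine Finset.card_le_card_of_injOn rank (fun i hi => ?_) fun a ha b hb hab => ?_
        · simpa using (Finset.mem_filter.1 hi).2
        · have ha := (Finset.mem_filter.1 ha).1
          have hb := (Finset.mem_filter.1 hb).1
          rcases lt_trichotomy (f a) (f b) with h | h | h
          · exact absurd hab (rank_strictMono a ha b h).ne
          · exact hf ha hb h
          · exact absurd hab (rank_strictMono b hb a h).ne'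
    _ = q := Finset.card_range q

omit [Fintype N] in
theorem IsBaseline.injOn_idxOf {order : List N} (hb : IsBaseline order) (s : Set N) :
    s.InjOn order.idxOf :=
  fun i _ _ _ h => (List.idxOf_inj (hb.2 i)).1 h

section SRR

variable {I : Inst N C} {cu1 cu2 : C}

omit [DecidableEq N] [DecidableEq C] in
theorem msize_le_card (μ : N → Option C) : msize μ ≤ Fintype.card N :=
  (Finset.card_filter_le _ _).trans_eq Finset.card_univ

omit [DecidableEq N] in
theorem PMatch.of_subset {S T : Finset N} {μ : N → Option C} (h : PMatch I cu1 cu2 T μ)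
    (hST : S ⊆ T) : PMatch I cu1 cu2 S μ :=
  ⟨h.1, fun i hi => h.2.1 i (hST hi), h.2.2⟩

omit [DecidableEq N] in
theorem PMatch.msize_le_msAvoid {S : Finset N} {μ : N → Option C}
    (h : PMatch I cu1 cu2 S μ) : msize μ ≤ msAvoid I cu1 cu2 S :=
  le_csSup ⟨Fintype.card N, by rintro _ ⟨ν, -, rfl⟩; exact msize_le_card ν⟩
    ⟨μ, h, rfl⟩

theorem msR_empty (I : Inst N C) (cu1 cu2 : C) (N1 : Finset N) :
    msR I cu1 cu2 N1 ∅ = msAvoid I cu1 cu2 N1 := by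
  simp [msR, msAvoid, PMatchR]

theorem card_srrN1_le (I : Inst N C) (cu1 cu2 : C) (order : List N) :
    (srrN1 I cu1 cu2 order).card ≤ I.quota cu1 := by
  refine List.foldlRecOn (motive := fun N1 : Finset N => N1.card ≤ I.quota cu1) _ _ (by simp) ?_
  intro N1 hN1 i _
  split_ifs with h
  exacts [(Finset.card_insert_le i N1).trans h.1, hN1]

theorem msAvoid_srrN1 (I : Inst N C) (cu1 cu2 : C) (order : List N) :
    msAvoid I cu1 cu2 (srrN1 I cu1 cu2 order) = msAvoid I cu1 cu2 ∅ := by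
  refine List.foldlRecOn
    (motive := fun N1 => msAvoid I cu1 cu2 N1 = msAvoid I cu1 cu2 ∅) _ _ rfl ?_
  intro N1 hN1 i _
  split_ifs with h
  exacts [h.2, hN1]

theorem msR_srrRej (I : Inst N C) (cu1 cu2 : C) (order : List N) (N1 : Finset N) :
    msR I cu1 cu2 N1 (srrRej I cu1 cu2 order N1) = msR I cu1 cu2 N1 ∅ := by
  refine List.foldrRecOn
    (motive := fun R => msR I cu1 cu2 N1 R = msR I cu1 cu2 N1 ∅) _ _ rfl ?_
  intro R hR i _
  split_ifs with h
  exacts [h, hR]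

theorem msR_srrN1_srrRej (I : Inst N C) (cu1 cu2 : C) (order : List N) :
    msR I cu1 cu2 (srrN1 I cu1 cu2 order) (srrRej I cu1 cu2 order (srrN1 I cu1 cu2 order)) =
      msAvoid I cu1 cu2 ∅ := by
  rw [msR_srrRej, msR_empty, msAvoid_srrN1]

/-- The agents who queue for `c_u^2`. -/
def srrWaiting (N1 : Finset N) (μP : N → Option C) : Finset N :=
  Finset.univ.filter fun j => j ∉ N1 ∧ μP j = none

variable {order : List N} {N1 : Finset N} {μP : N → Option C} {i : N} {c : C}

omit [DecidableEq C] in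
theorem srrFinal_of_notMem (hi : i ∉ N1) (h : μP i = some c) :
    srrFinal I cu1 cu2 order N1 μP i = some c := by
  simp [srrFinal, hi, h]

omit [DecidableEq C] in
theorem srrFinal_eq_some (h : srrFinal I cu1 cu2 order N1 μP i = some c) :
    (i ∈ N1 ∧ c = cu1) ∨ μP i = some c ∨
      (c = cu2 ∧ i ∈ srrWaiting N1 μP ∧
        ((srrWaiting N1 μP).filter fun j => order.idxOf j < order.idxOf i).card <
          I.quota cu2) := by
  by_cases hi : i ∈ N1
  · simp_all [srrFinal]
  rcases hP : μP i with _ | c'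
  · have hqueue : (Finset.univ.filter fun j =>
        j ∉ N1 ∧ μP j = none ∧ order.idxOf j < order.idxOf i) =
          (srrWaiting N1 μP).filter fun j => order.idxOf j < order.idxOf i := by
      simp only [srrWaiting, Finset.filter_filter, and_assoc]
    simp only [srrFinal, if_neg hi, hP, hqueue] at h
    split_ifs at h with hq
    exact Or.inr (Or.inr ⟨(Option.some_injective _ h).symm, by simp [srrWaiting, hi, hP], hq⟩)
  · simp_all [srrFinal]

theorem isMatching_srrFinal (hne : cu1 ≠ cu2) (hb : IsBaseline order)
    (hP : PMatch I cu1 cu2 ∅ μP) (hN1 : N1.card ≤ I.quota cu1) :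
    I.IsMatching (srrFinal I cu1 cu2 order N1 μP) := by
  obtain ⟨hμP, -, hpref⟩ := hP
  intro c
  by_cases hc1 : c = cu1
  · subst hc1
    refine (Finset.card_le_card fun i hi => ?_).trans hN1
    rcases srrFinal_eq_some (Finset.mem_filter.1 hi).2 with h | h | h
    · exact h.1
    · exact absurd rfl (hpref i _ h).1
    · exact absurd h.1 hne
  by_cases hc2 : c = cu2
  · subst hc2
    refine (Finset.card_le_card fun i hi => ?_).trans
      ((srrWaiting N1 μP).card_filter_rank_lt_le (hb.injOn_idxOf _) _)
    rcases srrFinal_eq_some (Finset.mem_filter.1 hi).2 with h | h | h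
    · exact absurd h.2 hne.symm
    · exact absurd rfl (hpref i _ h).2.1
    · exact Finset.mem_filter.2 h.2
  · refine (Finset.card_le_card fun i hi => ?_).trans (hμP c)
    rcases srrFinal_eq_some (Finset.mem_filter.1 hi).2 with h | h | h
    · exact absurd h.2 hc1
    · exact Finset.mem_filter.2 ⟨Finset.mem_univ i, h⟩
    · exact absurd h.1 hc2

theorem complies_srrFinal (h1E : ∀ i : N, I.Eligible i cu1) (h2E : ∀ i : N, I.Eligible i cu2)
    (hP : PMatch I cu1 cu2 ∅ μP) : Complies I (srrFinal I cu1 cu2 order N1 μP) := by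
  intro i c hc
  rcases srrFinal_eq_some hc with ⟨-, rfl⟩ | h | ⟨rfl, -⟩
  exacts [h1E i, (hP.2.2 i c h).2.2, h2E i]

theorem msize_le_beneCount2_srrFinal (hP : PMatch I cu1 cu2 N1 μP) :
    msize μP ≤ beneCount2 cu1 cu2 (srrFinal I cu1 cu2 order N1 μP) := by
  refine Finset.card_le_card fun i hi => ?_
  obtain ⟨c, hc⟩ := Option.ne_none_iff_exists'.1 (Finset.mem_filter.1 hi).2
  have hi : i ∉ N1 := fun hi => by simp [hP.2.1 i hi] at hc
  obtain ⟨hc1, hc2, -⟩ := hP.2.2 i c hc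
  simp [srrFinal_of_notMem hi hc, hc1, hc2]

def prefPart (cu1 cu2 : C) (ν : N → Option C) : N → Option C :=
  fun i => (ν i).filter fun c => c ≠ cu1 ∧ c ≠ cu2

omit [DecidableEq N] in
theorem msize_prefPart (cu1 cu2 : C) (ν : N → Option C) :
    msize (prefPart cu1 cu2 ν) = beneCount2 cu1 cu2 ν := by
  unfold msize beneCount2 prefPart
  congr 1
  ext i
  rcases h : ν i with _ | c <;> simp [h]

omit [DecidableEq N] in
theorem pMatch_prefPart {ν : N → Option C} (hν : I.IsMatching ν)
    (hc : Complies I ν) : PMatch I cu1 cu2 ∅ (prefPart cu1 cu2 ν) := by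
  refine ⟨fun c => (Finset.card_le_card fun i hi => ?_).trans (hν c), by simp, fun i c h => ?_⟩
  · simp_all [prefPart]
  · simp only [prefPart, Option.filter_eq_some_iff, decide_eq_true_eq] at h
    exact ⟨h.2.1, h.2.2, hc i c h.1⟩

omit [DecidableEq N] in
theorem beneCount2_le_msAvoid_empty {ν : N → Option C} (hν : I.IsMatching ν)
    (hc : Complies I ν) : beneCount2 cu1 cu2 ν ≤ msAvoid I cu1 cu2 ∅ :=
  msize_prefPart cu1 cu2 ν ▸ (pMatch_prefPart hν hc).msize_le_msAvoid

end SRR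

theorem srr_complies_and_max_beneficiary_general (I : Inst N C) (cu1 cu2 : C) (order : List N)
    (μ : N → Option C) (hne : cu1 ≠ cu2) (hb : IsBaseline order)
    (h1E : ∀ i : N, I.Eligible i cu1) (h2E : ∀ i : N, I.Eligible i cu2)
    (hout : IsSRROutcome I cu1 cu2 order μ) :
    I.IsMatching μ ∧ Complies I μ ∧
      ∀ ν : N → Option C, I.IsMatching ν → Complies I ν →
        beneCount2 cu1 cu2 ν ≤ beneCount2 cu1 cu2 μ := by
  obtain ⟨μP, ⟨hP, -⟩, hsize, rfl⟩ := hout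
  have hP₀ : PMatch I cu1 cu2 ∅ μP := hP.of_subset (Finset.empty_subset _)
  refine ⟨isMatching_srrFinal hne hb hP₀ (card_srrN1_le I cu1 cu2 order),
    complies_srrFinal h1E h2E hP₀, fun ν hν hc => ?_⟩
  calc beneCount2 cu1 cu2 ν ≤ msAvoid I cu1 cu2 ∅ := beneCount2_le_msAvoid_empty hν hc
    _ = msize μP := by rw [hsize, msR_srrN1_srrRej]
    _ ≤ _ := msize_le_beneCount2_srrFinal (hP.of_subset Finset.subset_union_left)

/-- Every matching output by the SRR rule complies with the eligibility
requirements and is a maximum beneficiary assignment: it maximizes the number of agents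
matched to preferential categories among all matchings complying with the eligibility
requirements. -/
theorem srr_complies_and_max_beneficiary (I : Inst N C) (cu1 cu2 : C) (order : List N)
    (μ : N → Option C) (hne : cu1 ≠ cu2) (hb : IsBaseline order)
    (h1E : ∀ i : N, I.Eligible i cu1) (h2E : ∀ i : N, I.Eligible i cu2)
    (h1P : ∀ i j : N, I.Strict cu1 (some i) (some j) ↔ order.idxOf i < order.idxOf j)
    (h2P : ∀ i j : N, I.Strict cu2 (some i) (some j) ↔ order.idxOf i < order.idxOf j)
    (hout : IsSRROutcome I cu1 cu2 order μ) :
    I.IsMatching μ ∧ Complies I μ ∧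
      ∀ ν : N → Option C, I.IsMatching ν → Complies I ν →
        beneCount2 cu1 cu2 ν ≤ beneCount2 cu1 cu2 μ :=
  srr_complies_and_max_beneficiary_general I cu1 cu2 order μ hne hb h1E h2E hout
end
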